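/- arXiv:2005.04951 — 2 statements merged into one kernel-verified Lean document; each statement's English description precedes it below -/
import Mathlib

section
/- Let μ be a pattern string over an alphabet A extended by variables, containing exactly k distinct variables x_1,...,x_k (k ≥ 1), and let λ be a string over A of length n. Then the number of substitution maps assigning to each variable x_j a nonempty string κ_j over A such that simultaneously substituting κ_j for x_j in μ yields λ is at most the binomial coefficient C(n-1, k-1). -/
/-!
A solution `κ` is determined by its length profile `ℓ_x = |κ_x|`: the words `κ_x` can then be
read off `λ` from left to right. If `x` occurs `m_x ≥ 1` times in `μ` and `μ` has `c` letters,
then `c + ∑ m_x ℓ_x = n`, so `x ↦ m_x ℓ_x` maps the solutions injectively to the compositions of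
`n - c` into `k` positive parts. By stars and bars there are at most
`C(n - c - 1, k - 1) ≤ C(n - 1, k - 1)` of these.
-/

/-- Substitute strings for variables in a pattern over `A ⊕ X` and concatenate. -/
def patternSubst {A X : Type*} (σ : X → List A) (μ : List (A ⊕ X)) : List A :=
  μ.flatMap (Sum.elim (fun a => [a]) σ)

theorem ncard_setOf_sum_eq {ι : Type*} [Fintype ι] (N : ℕ) :
    {P : ι → ℕ | ∑ i, P i = N}.ncard = (Fintype.card ι + N - 1).choose N := by
  classical
  rw [← Nat.card_coe_set_eq, Set.coe_ofPred, ← Nat.card_congr (Sym.equivNatSumOfFintype ι N),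
    Nat.card_eq_fintype_card, Sym.card_sym_eq_choose]

theorem finite_setOf_sum_eq {ι : Type*} [Fintype ι] (N : ℕ) :
    {P : ι → ℕ | ∑ i, P i = N}.Finite := by
  classical
  exact Set.finite_coe_iff.1 (Finite.of_equiv _ (Sym.equivNatSumOfFintype ι N))

theorem ncard_setOf_pos_sum_eq_le {ι : Type*} [Fintype ι] (N : ℕ) :
    {P : ι → ℕ | (∀ i, 0 < P i) ∧ ∑ i, P i = N}.ncard
      ≤ (N - 1).choose (Fintype.card ι - 1) := by
  set k := Fintype.card ι
  have hk_le : ∀ P : ι → ℕ, (∀ i, 0 < P i) → k ≤ ∑ i, P i := fun P hP => by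
    simpa [k] using Finset.card_nsmul_le_sum Finset.univ P 1 fun i _ => hP i
  by_cases hN : N < k
  · have hempty : {P : ι → ℕ | (∀ i, 0 < P i) ∧ ∑ i, P i = N} = ∅ :=
      Set.eq_empty_of_forall_notMem fun P ⟨hP, hsum⟩ => by have := hk_le P hP; omega
    simp [hempty]
  calc _ ≤ {Q : ι → ℕ | ∑ i, Q i = N - k}.ncard := by
        refine Set.ncard_le_ncard_of_injOn (fun P i => P i - 1) ?_ ?_ (finite_setOf_sum_eq _)
        · rintro P ⟨hP, rfl⟩
          have hshift : ∑ i, (P i - 1) + k = ∑ i, P i := by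
            rw [show k = ∑ _i : ι, 1 from Fintype.card_eq_sum_ones, ← Finset.sum_add_distrib]
            exact Finset.sum_congr rfl fun i _ => Nat.sub_add_cancel (hP i)
          exact Nat.eq_sub_of_add_eq hshift
        · rintro P ⟨hP, -⟩ Q ⟨hQ, -⟩ h
          funext i
          have hPQ : P i - 1 = Q i - 1 := congrFun h i
          have := hP i; have := hQ i
          omega
    _ = (N - 1).choose (N - k) := by
        rw [ncard_setOf_sum_eq]
        congr 1; omega
    _ ≤ (N - 1).choose (k - 1) := by
        rcases Nat.eq_zero_or_pos k with hk | hk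
        · rcases Nat.eq_zero_or_pos N with rfl | hN0
          · simp [hk]
          · rw [hk, Nat.sub_zero, Nat.choose_eq_zero_of_lt (by omega)]
            exact Nat.zero_le _
        · exact (Nat.choose_symm_of_eq_add (by omega)).le

section Pattern

variable {A X : Type*}

theorem length_patternSubst [DecidableEq X] (τ : X → List A) {μ : List (A ⊕ X)}
    {V : Finset X} (hV : ∀ x, Sum.inr x ∈ μ → x ∈ V) :
    (patternSubst τ μ).length
      = μ.countP Sum.isLeft + ∑ x ∈ V, (μ.filterMap Sum.getRight?).count x * (τ x).length := by
  induction μ with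
  | nil => simp [patternSubst]
  | cons e μ ih =>
    have ih := ih fun x hx => hV x (List.mem_cons_of_mem e hx)
    simp only [patternSubst, List.flatMap_cons, List.length_append] at ih ⊢
    rcases e with a | y
    · simp [ih, List.countP_cons, List.filterMap_cons]; ring
    · have hy : y ∈ V := hV y List.mem_cons_self
      simp [ih, List.count_cons, add_mul, Finset.sum_add_distrib, Finset.sum_ite_eq, hy]
      ring

theorem eq_of_patternSubst_eq {τ τ' : X → List A} {μ : List (A ⊕ X)}
    (hlen : ∀ x, Sum.inr x ∈ μ → (τ x).length = (τ' x).length)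
    (h : patternSubst τ μ = patternSubst τ' μ) : ∀ x, Sum.inr x ∈ μ → τ x = τ' x := by
  induction μ with
  | nil => simp
  | cons e μ ih =>
    have ih := ih fun x hx => hlen x (List.mem_cons_of_mem e hx)
    simp only [patternSubst, List.flatMap_cons] at h ih
    rcases e with a | y
    · simp only [Sum.elim_inl, List.singleton_append, List.cons.injEq, true_and] at h
      simpa using ih h
    · obtain ⟨hy, hμ⟩ := List.append_inj h (hlen y List.mem_cons_self)
      simp only [List.mem_cons, Sum.inr.injEq, forall_eq_or_imp]
      exact ⟨hy, ih hμ⟩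

theorem eq_of_patternSubst_dite_eq [DecidableEq X] {μ : List (A ⊕ X)} {V : Finset X}
    (hV : ∀ x ∈ V, Sum.inr x ∈ μ) {σ σ' : V → List A}
    (hlen : ∀ x, (σ x).length = (σ' x).length)
    (h : patternSubst (fun x => if h : x ∈ V then σ ⟨x, h⟩ else []) μ
      = patternSubst (fun x => if h : x ∈ V then σ' ⟨x, h⟩ else []) μ) :
    σ = σ' := by
  have := eq_of_patternSubst_eq (fun x _ => by by_cases hx : x ∈ V <;> simp [hx, hlen]) h
  funext x
  simpa using this x (hV x x.2)

end Pattern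

theorem inst_card_le_general {A X : Type*} [DecidableEq X]
    (μ : List (A ⊕ X)) (lam : List A) (V : Finset X)
    (hV : ∀ x : X, Sum.inr x ∈ μ ↔ x ∈ V)
    (k : ℕ) (hk : V.card = k)
    (n : ℕ) (hn : lam.length = n) :
    {σ : V → List A |
        (∀ x, σ x ≠ []) ∧
        patternSubst (fun x => if h : x ∈ V then σ ⟨x, h⟩ else []) μ = lam}.ncard
      ≤ (n - 1).choose (k - 1) := by
  set extend : (V → List A) → X → List A := fun σ x => if h : x ∈ V then σ ⟨x, h⟩ else []
  set c := μ.countP Sum.isLeft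
  let mult : V → ℕ := fun x => (μ.filterMap Sum.getRight?).count x.1
  have hmult : ∀ x, 0 < mult x := fun x =>
    List.count_pos_iff.2 (List.mem_filterMap.2 ⟨_, (hV x).2 x.2, rfl⟩)
  let weight : (V → List A) → V → ℕ := fun σ x => mult x * (σ x).length
  have hweight : ∀ σ, (patternSubst (extend σ) μ).length = c + ∑ x, weight σ x := fun σ => by
    rw [length_patternSubst _ fun x hx => (hV x).1 hx, ← Finset.sum_coe_sort V]
    simp [extend, weight, mult, c]
  calc _ ≤ {P : V → ℕ | (∀ x, 0 < P x) ∧ ∑ x, P x = n - c}.ncard := by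
        refine Set.ncard_le_ncard_of_injOn weight ?_ ?_
          ((finite_setOf_sum_eq _).subset fun _ h => h.2)
        · rintro σ ⟨hne, hσ⟩
          refine ⟨fun x => Nat.mul_pos (hmult x) (List.length_pos_iff.2 (hne x)), ?_⟩
          have := hweight σ
          rw [hσ, hn] at this
          omega
        · rintro σ ⟨-, hσ⟩ σ' ⟨-, hσ'⟩ h
          have hlen : ∀ x : V, (σ x).length = (σ' x).length := fun x =>
            Nat.eq_of_mul_eq_mul_left (hmult x) (congrFun h x)
          exact eq_of_patternSubst_dite_eq (fun x hx => (hV x).2 hx) hlen (hσ.trans hσ'.symm)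
    _ ≤ (n - c - 1).choose (k - 1) := by simpa [hk] using ncard_setOf_pos_sum_eq_le (ι := V) _
    _ ≤ (n - 1).choose (k - 1) := Nat.choose_le_choose _ (by omega)

/-- If the pattern `μ` contains exactly the `k ≥ 1` distinct variables of
`V`, and `lam` is a string over `A` of length `n`, then the number of assignments of
nonempty strings to the variables of `μ` whose substitution into `μ` yields `lam`
is at most `C(n-1, k-1)`. -/
theorem inst_card_le {A X : Type*} [DecidableEq X]
    (μ : List (A ⊕ X)) (lam : List A) (V : Finset X)
    (hV : ∀ x : X, Sum.inr x ∈ μ ↔ x ∈ V)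
    (k : ℕ) (hk : V.card = k) (hk1 : 1 ≤ k)
    (n : ℕ) (hn : lam.length = n) :
    {σ : V → List A |
        (∀ x, σ x ≠ []) ∧
        patternSubst (fun x => if h : x ∈ V then σ ⟨x, h⟩ else []) μ = lam}.ncard
      ≤ (n - 1).choose (k - 1) :=
  inst_card_le_general μ lam V hV k hk n hn
end

section
/- Consistency of purely Horn mathematical systems: Let M be a first-order system whose nonlogical axioms consist exactly of finitely many quantifier-free positive Horn formulas (iterated implications of atomic formulas), together with the equality axioms, propositional tautologies, quantifier axioms, and rules modus ponens, substitution, generalization, and a structural induction rule for the inductively defined predicates. Then M is consistent: no proof contains both a formula F and its negation ¬F. -/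
/-- Propositional functions over atoms of type `α`. -/
inductive PropForm (α : Type*) : Type _
  | var : α → PropForm α
  | neg : PropForm α → PropForm α
  | imp : PropForm α → PropForm α → PropForm α
  | biimp : PropForm α → PropForm α → PropForm α
  | conj : PropForm α → PropForm α → PropForm α
  | disj : PropForm α → PropForm α → PropForm α

def PropForm.eval {α : Type*} (v : α → Bool) : PropForm α → Bool
  | .var a => v a
  | .neg f => ! f.eval v
  | .imp f g => ! f.eval v || g.eval v
  | .biimp f g => f.eval v == g.eval v
  | .conj f g => f.eval v && g.eval v
  | .disj f g => f.eval v || g.eval v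

/-- Lists (of terms) over a constant/operation alphabet `A` and variables `V`. -/
inductive Lst (A V : Type*) : Type _
  | const : A → Lst A V
  | var : V → Lst A V
  | app : A → Lst A V → Lst A V
  | cat : Lst A V → Lst A V → Lst A V

namespace Lst

variable {A V : Type*}

def vars : Lst A V → Set V
  | const _ => ∅
  | var x => {x}
  | app _ l => l.vars
  | cat l m => l.vars ∪ m.vars

variable [DecidableEq V]

/-- Substitute the list `μ` for the variable `x`. -/
def substL (μ : Lst A V) (x : V) : Lst A V → Lst A V
  | const a => const a
  | var z => if z = x then μ else var z
  | app a l => app a (Lst.substL μ x l)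
  | cat l m => cat (Lst.substL μ x l) (Lst.substL μ x m)

end Lst

/-- Prime formulas: equations and atomic formulas over lists of terms. -/
inductive PrimeF (A V P : Type*) : Type _
  | eq : Lst A V → Lst A V → PrimeF A V P
  | pred : P → List (Lst A V) → PrimeF A V P

namespace PrimeF

variable {A V P : Type*}

def vars : PrimeF A V P → Set V
  | eq l m => l.vars ∪ m.vars
  | pred _ ls => {x | ∃ l ∈ ls, x ∈ l.vars}

variable [DecidableEq V]

def substL (μ : Lst A V) (x : V) : PrimeF A V P → PrimeF A V P
  | eq l m => eq (Lst.substL μ x l) (Lst.substL μ x m)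
  | pred p ls => pred p (ls.map (Lst.substL μ x))

end PrimeF

/-- First-order formulas over prime formulas with lists of terms as arguments. -/
inductive Fml (A V P : Type*) : Type _
  | prime : PrimeF A V P → Fml A V P
  | neg : Fml A V P → Fml A V P
  | imp : Fml A V P → Fml A V P → Fml A V P
  | biimp : Fml A V P → Fml A V P → Fml A V P
  | conj : Fml A V P → Fml A V P → Fml A V P
  | disj : Fml A V P → Fml A V P → Fml A V P
  | all : V → Fml A V P → Fml A V P
  | ex : V → Fml A V P → Fml A V P

namespace Fml

variable {A V P : Type*}

/-- All variables occurring in a formula. -/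
def vars : Fml A V P → Set V
  | prime F => F.vars
  | neg F => F.vars
  | imp F G => F.vars ∪ G.vars
  | biimp F G => F.vars ∪ G.vars
  | conj F G => F.vars ∪ G.vars
  | disj F G => F.vars ∪ G.vars
  | all x F => insert x F.vars
  | ex x F => insert x F.vars

/-- The free variables of a formula. -/
def free : Fml A V P → Set V
  | prime F => F.vars
  | neg F => F.free
  | imp F G => F.free ∪ G.free
  | biimp F G => F.free ∪ G.free
  | conj F G => F.free ∪ G.free
  | disj F G => F.free ∪ G.free
  | all x F => F.free \ {x}
  | ex x F => F.free \ {x}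

variable [DecidableEq V]

/-- Substitute the list `μ` for every free occurrence of the variable `x`. -/
def substL (μ : Lst A V) (x : V) : Fml A V P → Fml A V P
  | prime F => prime (F.substL μ x)
  | neg F => neg (Fml.substL μ x F)
  | imp F G => imp (Fml.substL μ x F) (Fml.substL μ x G)
  | biimp F G => biimp (Fml.substL μ x F) (Fml.substL μ x G)
  | conj F G => conj (Fml.substL μ x F) (Fml.substL μ x G)
  | disj F G => disj (Fml.substL μ x F) (Fml.substL μ x G)
  | all z F => if z = x then all z F else all z (Fml.substL μ x F)
  | ex z F => if z = x then ex z F else ex z (Fml.substL μ x F)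

/-- Collision-freeness of substituting the list `μ` for the variable `x`. -/
def CF (μ : Lst A V) (x : V) : Fml A V P → Prop
  | prime _ => True
  | neg F => Fml.CF μ x F
  | imp F G => Fml.CF μ x F ∧ Fml.CF μ x G
  | biimp F G => Fml.CF μ x F ∧ Fml.CF μ x G
  | conj F G => Fml.CF μ x F ∧ Fml.CF μ x G
  | disj F G => Fml.CF μ x F ∧ Fml.CF μ x G
  | all z F => x ∉ (Fml.all z F).free ∨ (z ∉ μ.vars ∧ Fml.CF μ x F)
  | ex z F => x ∉ (Fml.ex z F).free ∨ (z ∉ μ.vars ∧ Fml.CF μ x F)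

end Fml

def PropForm.toFml {A V P : Type*} : PropForm (Fml A V P) → Fml A V P
  | .var F => F
  | .neg f => .neg f.toFml
  | .imp f g => .imp f.toFml g.toFml
  | .biimp f g => .biimp f.toFml g.toFml
  | .conj f g => .conj f.toFml g.toFml
  | .disj f g => .disj f.toFml g.toFml

/-- Quantifier-free positive Horn formulas: iterated implications of prime
formulas. -/
inductive IsHorn {A V P : Type*} : Fml A V P → Prop
  | prime (F : PrimeF A V P) : IsHorn (.prime F)
  | imp (F : PrimeF A V P) {G : Fml A V P} : IsHorn G → IsHorn (.imp (.prime F) G)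

/-- The conclusion (last prime formula) of an iterated implication. -/
def Fml.concl {A V P : Type*} : Fml A V P → Fml A V P
  | .imp _ G => G.concl
  | F => F

/-- Substitute the lists `ls` for the variables `xs` (sequentially) in `G`. -/
def Fml.substMany {A V P : Type*} [DecidableEq V]
    (G : Fml A V P) (xs : List V) (ls : List (Lst A V)) : Fml A V P :=
  (xs.zip ls).foldl (fun F q => Fml.substL q.2 q.1 F) G

/-- Replace in a formula every `i`-ary prime subformula `p λ_1,...,λ_i` by
`G[λ_1/x_1,...,λ_i/x_i]`. -/
def transform {A V P : Type*} [DecidableEq V] [DecidableEq P]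
    (p : P) (i : ℕ) (xs : List V) (G : Fml A V P) : Fml A V P → Fml A V P
  | .prime (.eq l m) => .prime (.eq l m)
  | .prime (.pred q ls) =>
      if q = p ∧ ls.length = i then G.substMany xs ls else .prime (.pred q ls)
  | .neg F => .neg (transform p i xs G F)
  | .imp F G' => .imp (transform p i xs G F) (transform p i xs G G')
  | .biimp F G' => .biimp (transform p i xs G F) (transform p i xs G G')
  | .conj F G' => .conj (transform p i xs G F) (transform p i xs G G')
  | .disj F G' => .disj (transform p i xs G F) (transform p i xs G G')
  | .all z F => .all z (transform p i xs G F)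
  | .ex z F => .ex z (transform p i xs G F)

/-- The axioms of equality (3.10). -/
inductive EqAx {A V P : Type*} [DecidableEq V] : Fml A V P → Prop
  | refl (x : V) : EqAx (.prime (.eq (.var x) (.var x)))
  | substAx (x y : V) (l m : Lst A V) :
      EqAx (.imp (.prime ((PrimeF.eq l m).substL (.var x) y))
        (.imp (.prime (.eq (.var x) (.var y))) (.prime (.eq l m))))
  | predAx (p : P) (xs ys : List V) (h : xs.length = ys.length) (hne : xs ≠ []) :
      EqAx ((xs.zip ys).foldr
        (fun q F => Fml.imp (.prime (.eq (.var q.1) (.var q.2))) F)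
        (Fml.imp (.prime (.pred p (xs.map .var)))
          (.prime (.pred p (ys.map .var)))))

/-- Provability in the mathematical system with basis axioms `B`: substitution
instances of propositional tautologies, the axioms of equality, the quantifier
axioms, the basis axioms, and the rules modus ponens, collision-free substitution,
generalization and structural induction with respect to the Horn axioms `B`. -/
inductive Provable {A V P : Type*} [DecidableEq V] [DecidableEq P]
    (B : Set (Fml A V P)) : Fml A V P → Prop
  | taut (α : PropForm (Fml A V P)) (h : ∀ v, α.eval v = true) : Provable B α.toFml
  | eqax {F} (h : EqAx F) : Provable B F
  | q1 (x : V) (F : Fml A V P) : Provable B (.imp (.all x F) F)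
  | q2 (x : V) (F G : Fml A V P) (h : x ∉ F.free) :
      Provable B (.imp (.all x (.imp F G)) (.imp F (.all x G)))
  | q3 (x : V) (F : Fml A V P) :
      Provable B (.biimp (.neg (.all x (.neg F))) (.ex x F))
  | base {F} (h : F ∈ B) : Provable B F
  | mp {F G} : Provable B (.imp F G) → Provable B F → Provable B G
  | subst {F} (μ : Lst A V) (x : V) (h : F.CF μ x) :
      Provable B F → Provable B (F.substL μ x)
  | gen (x : V) {F} : Provable B F → Provable B (.all x F)
  | ind (p : P) (xs : List V) (G : Fml A V P) (hnodup : xs.Nodup)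
      (hxs : ∀ x ∈ xs, ∀ F ∈ B, x ∉ Fml.vars F)
      (hG : ∀ v ∈ G.vars, ∀ F ∈ B, v ∉ Fml.vars F)
      (h : ∀ F ∈ B,
        (∃ ls : List (Lst A V), ls.length = xs.length ∧
            Fml.concl F = .prime (.pred p ls)) →
        Provable B (transform p xs.length xs G F)) :
      Provable B (.imp (.prime (.pred p (xs.map .var))) G)
/-!
Assign to every formula a truth value χ: equations are true, an atom `p λ₁ … λₙ` is true
iff the pair `(p, n)` is productive, connectives are read truth-functionally and quantifiers
are ignored. The productive pairs form the least set `S` such that `(p, n) ∈ S` whenever some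
axiom concludes a `p`-atom of arity `n` from equations and atoms whose pairs lie in `S`. Every
axiom and every rule preserves χ = true; for the induction rule this is an induction along the
least fixed point. Since χ(¬F) = ¬χ(F), no formula is provable together with its negation.
-/

namespace Fml

variable {A V P : Type*}

open Classical in
noncomputable def sign (S : Set (P × ℕ)) : Fml A V P → Bool
  | .prime (.eq _ _) => true
  | .prime (.pred p ls) => decide ((p, ls.length) ∈ S)
  | .neg F => !F.sign S
  | .imp F G => !F.sign S || G.sign S
  | .biimp F G => F.sign S == G.sign S
  | .conj F G => F.sign S && G.sign S
  | .disj F G => F.sign S || G.sign S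
  | .all _ F => F.sign S
  | .ex _ F => F.sign S

section Substitution

variable [DecidableEq V] (S : Set (P × ℕ))

theorem sign_substL (μ : Lst A V) (x : V) (F : Fml A V P) :
    (F.substL μ x).sign S = F.sign S := by
  induction F with
  | prime F => cases F <;> simp [substL, PrimeF.substL, sign]
  | neg F ih => simp [substL, sign, ih]
  | imp F G ihF ihG | biimp F G ihF ihG | conj F G ihF ihG | disj F G ihF ihG =>
    simp [substL, sign, ihF, ihG]
  | all z F ih | ex z F ih => simp only [substL]; split <;> simp [sign, ih]

theorem sign_substMany (G : Fml A V P) (xs : List V) (ls : List (Lst A V)) :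
    (G.substMany xs ls).sign S = G.sign S := by
  unfold substMany
  induction xs.zip ls generalizing G with
  | nil => rfl
  | cons q L ih => rw [List.foldl_cons, ih, sign_substL]

end Substitution

theorem sign_toFml (S : Set (P × ℕ)) (α : PropForm (Fml A V P)) :
    α.toFml.sign S = α.eval (sign S) := by
  induction α <;> simp [PropForm.toFml, PropForm.eval, sign, *]

theorem sign_foldr_imp_eq (S : Set (P × ℕ)) (L : List (V × V)) (F : Fml A V P) :
    (L.foldr (fun q G => imp (prime (.eq (.var q.1) (.var q.2))) G) F).sign S = F.sign S := by
  induction L <;> simp [sign, *]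

inductive Yields (S : Set (P × ℕ)) (p : P) (n : ℕ) : Fml A V P → Prop
  | concl (ls : List (Lst A V)) (h : ls.length = n) : Yields S p n (prime (.pred p ls))
  | eqPrem (l m : Lst A V) {G : Fml A V P} :
      Yields S p n G → Yields S p n (imp (prime (.eq l m)) G)
  | predPrem (q : P) (ls : List (Lst A V)) {G : Fml A V P} (hq : (q, ls.length) ∈ S) :
      Yields S p n G → Yields S p n (imp (prime (.pred q ls)) G)

namespace Yields

variable {S T : Set (P × ℕ)} {p : P} {n : ℕ} {F : Fml A V P}

theorem mono (hST : S ⊆ T) (h : F.Yields S p n) : F.Yields T p n := by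
  induction h with
  | concl ls h => exact .concl ls h
  | eqPrem l m _ ih => exact .eqPrem l m ih
  | predPrem q ls hq _ ih => exact .predPrem q ls (hST hq) ih

theorem exists_concl_eq (h : F.Yields S p n) :
    ∃ ls : List (Lst A V), ls.length = n ∧ F.concl = prime (.pred p ls) := by
  induction h with
  | concl ls h => exact ⟨ls, h, rfl⟩
  | eqPrem _ _ _ ih | predPrem _ _ _ _ ih => exact ih

theorem sign_eq_true (h : F.Yields S p n) (hp : (p, n) ∈ S) : F.sign S = true := by
  induction h with
  | concl ls hls => simp [sign, hls, hp]
  | eqPrem _ _ _ ih => simp [sign, ih]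
  | predPrem _ _ _ _ ih => simp [sign, ih]

/-- Premises avoiding the pair `(p, n)` survive `transform` unchanged and stay true, while the
conclusion becomes an instance of `G`. -/
theorem sign_of_sign_transform [DecidableEq V] [DecidableEq P] (h : F.Yields S p n)
    (hST : S ⊆ T) (hpS : (p, n) ∉ S) {xs : List V} {G : Fml A V P}
    (hF : (transform p n xs G F).sign T = true) : G.sign T = true := by
  induction h with
  | concl ls hls => simpa [transform, hls, sign_substMany] using hF
  | eqPrem l m _ ih => exact ih (by simpa [transform, sign] using hF)
  | predPrem q ls hq _ ih =>
    have hqp : ¬ (q = p ∧ ls.length = n) := by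
      rintro ⟨rfl, rfl⟩
      exact hpS hq
    exact ih (by simpa [transform, hqp, sign, hST hq] using hF)

end Yields

end Fml

section Productive

variable {A V P : Type*}

theorem IsHorn.sign_eq_true_or_yields {F : Fml A V P} (h : IsHorn F) (S : Set (P × ℕ)) :
    F.sign S = true ∨ ∃ p n, F.Yields S p n := by
  induction h with
  | prime F =>
    cases F with
    | eq l m => exact .inl rfl
    | pred q ls => exact .inr ⟨q, ls.length, .concl ls rfl⟩
  | imp F _ ih =>
    cases F with
    | eq l m =>
      rcases ih with hG | ⟨p, n, hG⟩
      · exact .inl (by simp [Fml.sign, hG])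
      · exact .inr ⟨p, n, .eqPrem l m hG⟩
    | pred q ls =>
      by_cases hq : (q, ls.length) ∈ S
      · rcases ih with hG | ⟨p, n, hG⟩
        · exact .inl (by simp [Fml.sign, hG])
        · exact .inr ⟨p, n, .predPrem q ls hq hG⟩
      · exact .inl (by simp [Fml.sign, hq])

def productiveStep (B : Set (Fml A V P)) : Set (P × ℕ) →o Set (P × ℕ) where
  toFun S := {pn | ∃ F ∈ B, F.Yields S pn.1 pn.2}
  monotone' _ _ hST := fun _ ⟨F, hF, hY⟩ => ⟨F, hF, hY.mono hST⟩

def productive (B : Set (Fml A V P)) : Set (P × ℕ) :=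
  (productiveStep B).lfp

variable {B : Set (Fml A V P)}

theorem mem_productive_of_yields {F : Fml A V P} {p : P} {n : ℕ} (hF : F ∈ B)
    (h : F.Yields (productive B) p n) : (p, n) ∈ productive B := by
  rw [productive, ← OrderHom.map_lfp]
  exact ⟨F, hF, h⟩

theorem sign_productive_of_mem {F : Fml A V P} (hF : F ∈ B) (hhorn : IsHorn F) :
    F.sign (productive B) = true := by
  rcases hhorn.sign_eq_true_or_yields (productive B) with h | ⟨p, n, h⟩
  · exact h
  · exact h.sign_eq_true (mem_productive_of_yields hF h)

theorem sign_productive_of_transform [DecidableEq V] [DecidableEq P] {p : P} {n : ℕ}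
    (hp : (p, n) ∈ productive B) (xs : List V) (G : Fml A V P)
    (h : ∀ F ∈ B, (∃ ls : List (Lst A V), ls.length = n ∧ F.concl = .prime (.pred p ls)) →
      (transform p n xs G F).sign (productive B) = true) :
    G.sign (productive B) = true := by
  let premise (pn : P × ℕ) : Prop :=
    ∀ F ∈ B, (∃ ls : List (Lst A V), ls.length = pn.2 ∧ F.concl = .prime (.pred pn.1 ls)) →
      (transform pn.1 pn.2 xs G F).sign (productive B) = true
  let good : Set (P × ℕ) :=
    {pn | pn ∈ productive B ∧ (premise pn → G.sign (productive B) = true)}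
  -- `good` is a pre-fixed point of the step, hence contains the least fixed point.
  have hgood : productive B ⊆ good := by
    refine OrderHom.lfp_le _ fun ⟨q, m⟩ ⟨F, hF, hY⟩ => ?_
    have hgood_sub : good ⊆ productive B := fun _ h => h.1
    refine ⟨mem_productive_of_yields hF (hY.mono hgood_sub), fun hq => ?_⟩
    by_cases hqm : (q, m) ∈ good
    · exact hqm.2 hq
    · exact hY.sign_of_sign_transform hgood_sub hqm (hq F hF hY.exists_concl_eq)
  exact (hgood hp).2 h

theorem Provable.sign_productive [DecidableEq V] [DecidableEq P]
    (hhorn : ∀ F ∈ B, IsHorn F) {F : Fml A V P} (h : Provable B F) :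
    F.sign (productive B) = true := by
  induction h with
  | taut α h => rw [Fml.sign_toFml]; exact h _
  | eqax h =>
    cases h with
    | refl _ | substAx _ _ _ _ => rfl
    | predAx p xs ys hlen _ => simp [Fml.sign_foldr_imp_eq, Fml.sign, hlen, em']
  | q1 | q3 => simp [Fml.sign]
  | q2 _ F G _ => simp only [Fml.sign]; cases F.sign _ <;> cases G.sign _ <;> rfl
  | base hF => exact sign_productive_of_mem hF (hhorn _ hF)
  | mp _ _ ihFG ihF => simpa [Fml.sign, ihF] using ihFG
  | subst _ _ _ _ ih => rwa [Fml.sign_substL]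
  | gen _ _ ih => exact ih
  | ind p xs G _ _ _ _ ih =>
    by_cases hp : (p, xs.length) ∈ productive B
    · simp [Fml.sign, sign_productive_of_transform hp xs G ih]
    · simp [Fml.sign, hp]

end Productive

theorem horn_system_consistent_general {A V P : Type*} [DecidableEq V] [DecidableEq P]
    (B : Set (Fml A V P)) (hhorn : ∀ F ∈ B, IsHorn F) :
    ¬ ∃ F : Fml A V P, Provable B F ∧ Provable B (.neg F) := by
  rintro ⟨F, hF, hnF⟩
  have hneg := hnF.sign_productive hhorn
  simp [Fml.sign, hF.sign_productive hhorn] at hneg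

/-- Consistency of purely Horn mathematical systems: If the
nonlogical basis axioms `B` consist of finitely many quantifier-free positive Horn
formulas, then the system is consistent: no formula is provable together with its
negation. -/
theorem horn_system_consistent {A V P : Type*} [DecidableEq V] [DecidableEq P]
    (B : Set (Fml A V P)) (hfin : B.Finite) (hhorn : ∀ F ∈ B, IsHorn F) :
    ¬ ∃ F : Fml A V P, Provable B F ∧ Provable B (.neg F) :=
  horn_system_consistent_general B hhorn
end
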